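/- Let M ≥ 1 be an integer, let R = (R_0, …, R_M) with −1 < R_j < 1 for all j, let 0 ≤ n ≤ M, and let k^n be the vector with k^n_j = 1 for 0 ≤ j ≤ n and k^n_j = 0 for n < j ≤ M. Then the sum of the weights w(p) over all scattering sequences p ∈ S_M with κ(p) = k^n equals R_n · ∏_{j=0}^{n−1} (1 − R_j²) (Kunetz's formula). -/

import Mathlib

/-- Entry `i` of an integer sequence given as a list (default `0` out of range). -/
def ent (p : List ℤ) (i : ℕ) : ℤ := p.getD i 0

/-- Excursions of `p` to depth `n`: maximal blocks `[a, c]` of consecutive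
indices on which `p` is at least `n`. -/
def excSet (p : List ℤ) (n : ℤ) : Set (ℕ × ℕ) :=
  {ac | ac.1 ≤ ac.2 ∧ ac.2 ≤ p.length - 1 ∧
    (∀ i, ac.1 ≤ i → i ≤ ac.2 → n ≤ ent p i) ∧
    (ac.1 = 0 ∨ ent p (ac.1 - 1) < n) ∧
    (ac.2 = p.length - 1 ∨ ent p (ac.2 + 1) < n)}

/-- The left shift `(k_1, ..., k_M, 0)` of a vector `(k_0, ..., k_M)`. -/
def ktilde (M : ℕ) (k : Fin (M + 1) → ℕ) : Fin (M + 1) → ℕ :=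
  fun n => if h : (n : ℕ) + 1 < M + 1 then k ⟨(n : ℕ) + 1, h⟩ else 0

/-- The weight factor attached to interior index `i` of the sequence `p`:
`R_j` if `p_{i-1} = p_{i+1} = p_i - 1`, `-R_j` if `p_{i-1} = p_{i+1} = p_i + 1`,
and the transmission coefficient `T_j = √(1 - R_j²)` otherwise (`j = p_i`). -/
noncomputable def wstep (R : ℤ → ℝ) (p : List ℤ) (i : ℕ) : ℝ :=
  if ent p (i - 1) = ent p i - 1 ∧ ent p (i + 1) = ent p i - 1 then R (ent p i)
  else if ent p (i - 1) = ent p i + 1 ∧ ent p (i + 1) = ent p i + 1 then -R (ent p i)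
  else Real.sqrt (1 - R (ent p i) ^ 2)

/-- The weight of a scattering sequence `p = (p_0, ..., p_L)`:
the product of the factors `w_i` for `1 ≤ i ≤ L - 1`. -/
noncomputable def weight (R : ℤ → ℝ) (p : List ℤ) : ℝ :=
  ∏ i ∈ Finset.Icc 1 (p.length - 2), wstep R p i

/-- A reflection scattering sequence for an `M`-layer medium: a sequence
`(p_0, ..., p_L)` with `L ≥ 2`, `p_0 = p_L = -1`, `p_i ∈ {0, ..., M}` for
`1 ≤ i ≤ L - 1`, and `|p_{i+1} - p_i| = 1` for all `0 ≤ i ≤ L - 1`. -/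
def IsScat (M : ℕ) (p : List ℤ) : Prop :=
  3 ≤ p.length ∧ ent p 0 = -1 ∧ ent p (p.length - 1) = -1 ∧
  (∀ i, 1 ≤ i → i ≤ p.length - 2 → 0 ≤ ent p i ∧ ent p i ≤ (M : ℤ)) ∧
  (∀ i, i < p.length - 1 → |ent p (i + 1) - ent p i| = 1)

/-- The transit count vector `κ(p)`: `k_n` is the number of excursions of `p`
to depth `n`. -/
noncomputable def kappa (M : ℕ) (p : List ℤ) : Fin (M + 1) → ℕ :=
  fun n => (excSet p ((n : ℕ) : ℤ)).ncard

/-- The branch count vector `β(p)`: `b_n` is the number of excursions of `p`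
to depth `n` that contain some index `i` with `p_i ≥ n + 1`. -/
noncomputable def beta (M : ℕ) (p : List ℤ) : Fin (M + 1) → ℕ :=
  fun n => {ac ∈ excSet p ((n : ℕ) : ℤ) |
    ∃ i, ac.1 ≤ i ∧ i ≤ ac.2 ∧ ((n : ℕ) : ℤ) + 1 ≤ ent p i}.ncard


/-!
A valley `p_{i-1} = p_{i+1} = p_i + 1` separates two excursions to depth `p_i + 1`, so a
scattering sequence with at most one excursion to each depth has no valley. A `±1`-path from
`-1` to `-1` without valleys rises straight to a single peak and falls straight back, so the
only sequence with `κ(p) = kⁿ` is the tent `-1, 0, …, n, …, 0, -1`. Its weight is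
`T_0 ⋯ T_{n-1} · R_n · T_{n-1} ⋯ T_0`.
-/

lemma eq_add_one_or_eq_sub_one_of_abs_sub_eq_one {x y : ℤ} (h : |x - y| = 1) :
    x = y + 1 ∨ x = y - 1 := by
  rcases (abs_eq zero_le_one).mp h with h | h <;> omega

lemma exists_maximal_block_left {P : ℕ → Prop} {i : ℕ} (hi : P i) :
    ∃ a ≤ i, (∀ k, a ≤ k → k ≤ i → P k) ∧ (a = 0 ∨ ¬P (a - 1)) := by
  induction i with
  | zero => exact ⟨0, le_rfl, fun k _ hk => by rwa [Nat.le_zero.mp hk], Or.inl rfl⟩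
  | succ i ih =>
    by_cases hPi : P i
    · obtain ⟨a, hai, hblock, hleft⟩ := ih hPi
      refine ⟨a, by omega, fun k hak hki => ?_, hleft⟩
      rcases Nat.lt_or_eq_of_le hki with hk | rfl
      · exact hblock k hak (by omega)
      · exact hi
    · exact ⟨i + 1, le_rfl, fun k h1 h2 => by rwa [le_antisymm h2 h1], Or.inr hPi⟩

lemma exists_maximal_block_right {P : ℕ → Prop} {i n : ℕ} (hin : i ≤ n) (hi : P i) :
    ∃ b, i ≤ b ∧ b ≤ n ∧ (∀ k, i ≤ k → k ≤ b → P k) ∧ (b = n ∨ ¬P (b + 1)) := by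
  obtain ⟨d, rfl⟩ := Nat.exists_eq_add_of_le hin
  clear hin
  induction d generalizing i with
  | zero => exact ⟨i, le_rfl, le_rfl, fun k h1 h2 => by rwa [le_antisymm h2 h1], Or.inl rfl⟩
  | succ d ih =>
    by_cases hPi : P (i + 1)
    · obtain ⟨b, hib, hbn, hblock, hright⟩ := ih hPi
      rw [add_right_comm, add_assoc] at hright
      refine ⟨b, by omega, by omega, fun k hik hkb => ?_, hright⟩
      rcases Nat.lt_or_eq_of_le hik with hk | rfl
      · exact hblock k hk hkb
      · exact hi
    · exact ⟨i, le_rfl, by omega, fun k h1 h2 => by rwa [le_antisymm h2 h1], Or.inr hPi⟩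

lemma excSet_finite (p : List ℤ) (d : ℤ) : (excSet p d).Finite := by
  refine ((Set.finite_Iic (p.length - 1)).prod (Set.finite_Iic (p.length - 1))).subset ?_
  rintro ⟨a, b⟩ ⟨hab, hb, -⟩
  exact ⟨hab.trans hb, hb⟩

def HasValleyAt (p : List ℤ) (i : ℕ) : Prop :=
  ent p (i - 1) = ent p i + 1 ∧ ent p (i + 1) = ent p i + 1

lemma one_lt_ncard_excSet_of_hasValleyAt {p : List ℤ} {i : ℕ} (hi : 1 ≤ i)
    (hil : i + 1 < p.length) (hv : HasValleyAt p i) :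
    1 < (excSet p (ent p i + 1)).ncard := by
  obtain ⟨a, hai, hblockL, hleft⟩ :=
    exists_maximal_block_left (P := fun k => ent p i + 1 ≤ ent p k) (i := i - 1) hv.1.ge
  obtain ⟨b, hib, hbn, hblockR, hright⟩ :=
    exists_maximal_block_right (P := fun k => ent p i + 1 ≤ ent p k) (i := i + 1)
      (n := p.length - 1) (by omega) hv.2.ge
  rw [Set.one_lt_ncard (excSet_finite p _)]
  refine ⟨(a, i - 1), ⟨hai, by omega, hblockL, hleft.imp_right not_le.mp, Or.inr ?_⟩,
    (i + 1, b), ⟨hib, hbn, hblockR, Or.inr ?_, hright.imp_right not_le.mp⟩, ?_⟩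
  · rw [Nat.sub_add_cancel hi]; omega
  · rw [Nat.add_sub_cancel]; omega
  · simp only [ne_eq, Prod.mk.injEq]; omega

lemma not_hasValleyAt_of_kappa_le_one {M : ℕ} {p : List ℤ} (hp : IsScat M p)
    (hκ : ∀ j, kappa M p j ≤ 1) {i : ℕ} (hi : 1 ≤ i) (hil : i + 1 < p.length) :
    ¬HasValleyAt p i := by
  intro hv
  obtain ⟨-, -, hend, hint, -⟩ := hp
  have hpi := (hint i hi (by omega)).1
  have hv2 := hv.2
  have hi_succ : i + 1 ≤ p.length - 2 := by
    by_contra h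
    rw [show i + 1 = p.length - 1 by omega, hend] at hv2
    omega
  have hM := (hint (i + 1) (by omega) hi_succ).2
  obtain ⟨d, hd⟩ := Int.eq_ofNat_of_zero_le hpi
  have hκd := hκ ⟨d + 1, by omega⟩
  simp only [kappa, Nat.cast_add, Nat.cast_one, ← hd] at hκd
  have := one_lt_ncard_excSet_of_hasValleyAt hi hil hv
  omega

def tent (N i : ℕ) : ℤ := if i ≤ N + 1 then (i : ℤ) - 1 else 2 * N + 1 - i

def tentSeq (N : ℕ) : List ℤ := List.ofFn fun i : Fin (2 * N + 3) => tent N i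

lemma tentSeq_length (N : ℕ) : (tentSeq N).length = 2 * N + 3 := by
  simp [tentSeq]

lemma ent_tentSeq {N i : ℕ} (h : i < 2 * N + 3) : ent (tentSeq N) i = tent N i := by
  rw [ent, List.getD_eq_getElem _ _ (by rwa [tentSeq_length])]
  simp only [tentSeq, List.getElem_ofFn]

lemma eq_tentSeq_of_ent {p : List ℤ} {N : ℕ} (hlen : p.length = 2 * N + 3)
    (hent : ∀ i < 2 * N + 3, ent p i = tent N i) : p = tentSeq N := by
  refine List.ext_getElem (by rw [hlen, tentSeq_length]) fun i hi _ => ?_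
  have h := (hent i (by omega)).trans (ent_tentSeq (N := N) (by omega)).symm
  rwa [ent, ent, List.getD_eq_getElem, List.getD_eq_getElem] at h

lemma le_ent_tentSeq_iff {N : ℕ} (j : ℕ) {k : ℕ} (hk : k < 2 * N + 3) :
    (j : ℤ) ≤ ent (tentSeq N) k ↔ 1 + j ≤ k ∧ k ≤ 2 * N + 1 - j := by
  rw [ent_tentSeq hk, tent]
  split_ifs <;> omega

lemma excSet_tentSeq {N j : ℕ} (hj : j ≤ N) :
    excSet (tentSeq N) j = {(1 + j, 2 * N + 1 - j)} := by
  ext ⟨a, b⟩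
  simp only [excSet, Set.mem_ofPred_eq, Set.mem_singleton_iff, Prod.mk.injEq, tentSeq_length]
  constructor
  · rintro ⟨hab, hb, hblock, hleft, hright⟩
    have ha := (le_ent_tentSeq_iff j (by omega)).1 (hblock a le_rfl hab)
    have hb' := (le_ent_tentSeq_iff j (by omega)).1 (hblock b hab le_rfl)
    have hleft' := (hleft.resolve_left (by omega)).not_ge
    have hright' := (hright.resolve_left (by omega)).not_ge
    rw [le_ent_tentSeq_iff j (by omega)] at hleft' hright'
    omega
  · rintro ⟨rfl, rfl⟩
    refine ⟨by omega, by omega, fun k h1 h2 => (le_ent_tentSeq_iff j (by omega)).2 ⟨h1, h2⟩,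
      Or.inr (lt_of_not_ge ?_), Or.inr (lt_of_not_ge ?_)⟩ <;>
    rw [le_ent_tentSeq_iff j (by omega)] <;> omega

lemma excSet_tentSeq_of_lt {N j : ℕ} (hj : N < j) : excSet (tentSeq N) j = ∅ := by
  refine Set.eq_empty_of_forall_notMem fun ⟨a, b⟩ ⟨hab, hb, hblock, _⟩ => ?_
  rw [tentSeq_length] at hb
  have := (le_ent_tentSeq_iff j (by omega)).1 (hblock a le_rfl hab)
  omega

lemma kappa_tentSeq (M N : ℕ) :
    kappa M (tentSeq N) = fun j : Fin (M + 1) => if (j : ℕ) ≤ N then 1 else 0 := by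
  funext j
  split_ifs with hj
  · rw [kappa, excSet_tentSeq hj, Set.ncard_singleton]
  · rw [kappa, excSet_tentSeq_of_lt (not_le.mp hj), Set.ncard_empty]

lemma isScat_tentSeq {M N : ℕ} (hN : N ≤ M) : IsScat M (tentSeq N) := by
  simp only [IsScat, tentSeq_length]
  refine ⟨by omega, ?_, ?_, fun i hi1 hi2 => ?_, fun i hi => ?_⟩
  · rw [ent_tentSeq (by omega), tent]; simp
  · rw [ent_tentSeq (by omega), tent]; split_ifs <;> omega
  · rw [ent_tentSeq (by omega), tent]; split_ifs <;> omega
  · rw [ent_tentSeq (by omega), ent_tentSeq (by omega), tent, tent, abs_eq zero_le_one]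
    split_ifs <;> omega

lemma wstep_tentSeq_of_le {R : ℤ → ℝ} {N i : ℕ} (h1 : 1 ≤ i) (h2 : i ≤ N) :
    wstep R (tentSeq N) i = √(1 - R ((i : ℤ) - 1) ^ 2) := by
  have e1 : ent (tentSeq N) (i - 1) = (i : ℤ) - 2 := by
    rw [ent_tentSeq (by omega), tent]; split_ifs <;> omega
  have e2 : ent (tentSeq N) i = (i : ℤ) - 1 := by
    rw [ent_tentSeq (by omega), tent]; split_ifs <;> omega
  have e3 : ent (tentSeq N) (i + 1) = i := by
    rw [ent_tentSeq (by omega), tent]; split_ifs <;> omega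
  rw [wstep, e1, e2, e3, if_neg (by omega), if_neg (by omega)]

lemma wstep_tentSeq_peak (R : ℤ → ℝ) (N : ℕ) : wstep R (tentSeq N) (N + 1) = R N := by
  have e1 : ent (tentSeq N) (N + 1 - 1) = (N : ℤ) - 1 := by
    rw [ent_tentSeq (by omega), tent]; split_ifs <;> omega
  have e2 : ent (tentSeq N) (N + 1) = N := by
    rw [ent_tentSeq (by omega), tent]; split_ifs <;> omega
  have e3 : ent (tentSeq N) (N + 1 + 1) = (N : ℤ) - 1 := by
    rw [ent_tentSeq (by omega), tent]; split_ifs <;> omega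
  rw [wstep, e1, e2, e3, if_pos ⟨rfl, rfl⟩]

lemma wstep_tentSeq_of_ge {R : ℤ → ℝ} {N i : ℕ} (h1 : N + 2 ≤ i) (h2 : i ≤ 2 * N + 1) :
    wstep R (tentSeq N) i = √(1 - R (2 * (N : ℤ) + 1 - i) ^ 2) := by
  have e1 : ent (tentSeq N) (i - 1) = 2 * (N : ℤ) + 2 - i := by
    rw [ent_tentSeq (by omega), tent]; split_ifs <;> omega
  have e2 : ent (tentSeq N) i = 2 * (N : ℤ) + 1 - i := by
    rw [ent_tentSeq (by omega), tent]; split_ifs <;> omega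
  have e3 : ent (tentSeq N) (i + 1) = 2 * (N : ℤ) - i := by
    rw [ent_tentSeq (by omega), tent]; split_ifs <;> omega
  rw [wstep, e1, e2, e3, if_neg (by omega), if_neg (by omega)]

lemma weight_tentSeq {R : ℤ → ℝ} {N : ℕ} (hR : ∀ j < N, R j ^ 2 ≤ 1) :
    weight R (tentSeq N) = R N * ∏ j ∈ Finset.range N, (1 - R j ^ 2) := by
  have hrise : ∏ i ∈ Finset.range N, wstep R (tentSeq N) (1 + i) =
      ∏ j ∈ Finset.range N, √(1 - R j ^ 2) := by
    refine Finset.prod_congr rfl fun i hi => ?_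
    rw [Finset.mem_range] at hi
    rw [wstep_tentSeq_of_le (by omega) (by omega)]
    push_cast; ring_nf
  have hfall : ∏ i ∈ Finset.range N, wstep R (tentSeq N) (1 + (N + (i + 1))) =
      ∏ j ∈ Finset.range N, √(1 - R j ^ 2) := by
    rw [← Finset.prod_range_reflect (fun j : ℕ => √(1 - R j ^ 2))]
    refine Finset.prod_congr rfl fun i hi => ?_
    rw [Finset.mem_range] at hi
    rw [wstep_tentSeq_of_ge (by omega) (by omega), Nat.cast_sub (by omega),
      Nat.cast_sub (by omega)]
    push_cast; ring_nf
  calc weight R (tentSeq N)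
      = ∏ i ∈ Finset.range (N + (N + 1)), wstep R (tentSeq N) (1 + i) := by
        rw [weight, tentSeq_length, ← Finset.Ico_add_one_right_eq_Icc,
          Finset.prod_Ico_eq_prod_range, show 2 * N + 3 - 2 + 1 - 1 = N + (N + 1) by omega]
    _ = (∏ j ∈ Finset.range N, √(1 - R j ^ 2)) * R N *
          ∏ j ∈ Finset.range N, √(1 - R j ^ 2) := by
        rw [Finset.prod_range_add, Finset.prod_range_succ', hrise, hfall, add_zero,
          add_comm 1 N, wstep_tentSeq_peak]
        ring
    _ = R N * ∏ j ∈ Finset.range N, (1 - R j ^ 2) := by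
        rw [mul_comm, ← mul_assoc, ← Finset.prod_mul_distrib, mul_comm]
        congr 1
        refine Finset.prod_congr rfl fun j hj => Real.mul_self_sqrt ?_
        linarith [hR j (Finset.mem_range.mp hj)]

lemma ent_eq_sub_one_of_forall_rise {p : List ℤ} {m : ℕ} (h0 : ent p 0 = -1)
    (hrise : ∀ i < m, ent p (i + 1) = ent p i + 1) {i : ℕ} (hi : i ≤ m) :
    ent p i = (i : ℤ) - 1 := by
  induction i with
  | zero => simpa using h0
  | succ i ih => rw [hrise i (by omega), ih (by omega)]; push_cast; ring

lemma exists_eq_tentSeq_of_forall_not_hasValleyAt {p : List ℤ} (hlen : 2 ≤ p.length)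
    (h0 : ent p 0 = -1) (hend : ent p (p.length - 1) = -1)
    (hstep : ∀ i < p.length - 1, |ent p (i + 1) - ent p i| = 1)
    (hvalley : ∀ i, 1 ≤ i → i + 1 < p.length → ¬HasValleyAt p i) :
    ∃ N, p = tentSeq N := by
  have hstep' (i : ℕ) (hi : i < p.length - 1) :=
    eq_add_one_or_eq_sub_one_of_abs_sub_eq_one (hstep i hi)
  have hdescent : ∃ m, m < p.length - 1 ∧ ent p (m + 1) = ent p m - 1 := by
    by_contra! hascent
    have := ent_eq_sub_one_of_forall_rise h0
      (fun i hi => (hstep' i hi).resolve_right (hascent i hi)) (le_refl (p.length - 1))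
    omega
  classical
  set m := Nat.find hdescent
  obtain ⟨hm, hm_desc⟩ := Nat.find_spec hdescent
  have hrise (i : ℕ) (hi : i ≤ m) : ent p i = (i : ℤ) - 1 :=
    ent_eq_sub_one_of_forall_rise h0 (fun k hk => (hstep' k (by omega)).resolve_right
      fun h => Nat.find_min hdescent hk ⟨by omega, h⟩) hi
  -- a rise right after a descent would be a valley
  have hdesc (i : ℕ) (hmi : m ≤ i) (hi : i < p.length - 1) : ent p (i + 1) = ent p i - 1 := by
    induction i, hmi using Nat.le_induction with
    | base => exact hm_desc
    | succ i hmi ih =>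
      refine (hstep' (i + 1) hi).resolve_left fun h => hvalley (i + 1) (by omega) (by omega) ?_
      have := ih (by omega)
      exact ⟨by rw [Nat.add_sub_cancel]; omega, h⟩
  have hfall (i : ℕ) (hmi : m ≤ i) (hi : i ≤ p.length - 1) :
      ent p i = 2 * (m : ℤ) - 1 - i := by
    induction i, hmi using Nat.le_induction with
    | base => rw [hrise m le_rfl]; ring
    | succ i hmi ih => rw [hdesc i hmi (by omega), ih (by omega)]; push_cast; ring
  have hlen_eq : p.length = 2 * m + 1 := by
    have := hfall _ hm.le le_rfl
    omega
  refine ⟨m - 1, eq_tentSeq_of_ent (by omega) fun i hi => ?_⟩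
  rw [tent]
  split_ifs with h
  · rw [hrise i (by omega)]
  · rw [hfall i (by omega) (by omega)]; omega

lemma setOf_isScat_kappa_eq {M N : ℕ} (hN : N ≤ M) :
    {p : List ℤ | IsScat M p ∧
      kappa M p = fun j : Fin (M + 1) => if (j : ℕ) ≤ N then 1 else 0} = {tentSeq N} := by
  ext p
  simp only [Set.mem_ofPred_eq, Set.mem_singleton_iff]
  constructor
  · rintro ⟨hp, hκ⟩
    have hvalley (i : ℕ) (hi : 1 ≤ i) (hil : i + 1 < p.length) : ¬HasValleyAt p i :=
      not_hasValleyAt_of_kappa_le_one hp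
        (fun j => by rw [hκ]; dsimp only; split_ifs <;> omega) hi hil
    obtain ⟨hlen, h0, hend, hint, hstep⟩ := hp
    obtain ⟨N', rfl⟩ :=
      exists_eq_tentSeq_of_forall_not_hasValleyAt (by omega) h0 hend hstep hvalley
    have hN' : N' ≤ M := by
      have := (hint (N' + 1) (by omega) (by rw [tentSeq_length]; omega)).2
      rw [ent_tentSeq (by omega), tent, if_pos le_rfl] at this
      omega
    rw [kappa_tentSeq] at hκ
    have h1 := congrFun hκ ⟨N, by omega⟩
    have h2 := congrFun hκ ⟨N', by omega⟩
    simp only [le_refl, if_true] at h1 h2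
    obtain rfl : N' = N := by split_ifs at h1 h2; omega
    rfl
  · rintro rfl
    exact ⟨isScat_tentSeq hN, kappa_tentSeq M N⟩

theorem kunetz_formula_general (M : ℕ) (R : ℤ → ℝ)
    (hR : ∀ j : Fin (M + 1), -1 < R ((j : ℕ) : ℤ) ∧ R ((j : ℕ) : ℤ) < 1)
    (n : Fin (M + 1)) :
    {p : List ℤ | IsScat M p ∧
      kappa M p = fun j : Fin (M + 1) => if (j : ℕ) ≤ (n : ℕ) then 1 else 0}.Finite ∧
    ∑ᶠ p ∈ {p : List ℤ | IsScat M p ∧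
        kappa M p = fun j : Fin (M + 1) => if (j : ℕ) ≤ (n : ℕ) then 1 else 0}, weight R p =
      R ((n : ℕ) : ℤ) * ∏ j ∈ Finset.range (n : ℕ), (1 - R (j : ℤ) ^ 2) := by
  rw [setOf_isScat_kappa_eq (Nat.lt_succ_iff.mp n.isLt), finsum_mem_singleton]
  refine ⟨Set.finite_singleton _, weight_tentSeq fun j hj => ?_⟩
  obtain ⟨hlo, hhi⟩ := hR ⟨j, by omega⟩
  nlinarith

/-- Kunetz's formula: the sum of the weights of all scattering sequences with
the primary transit count vector `kⁿ` equals `R_n · ∏_{j<n} (1 - R_j²)`. -/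
theorem kunetz_formula (M : ℕ) (hM : 1 ≤ M) (R : ℤ → ℝ)
    (hR : ∀ j : Fin (M + 1), -1 < R ((j : ℕ) : ℤ) ∧ R ((j : ℕ) : ℤ) < 1)
    (n : Fin (M + 1)) :
    {p : List ℤ | IsScat M p ∧
      kappa M p = fun j : Fin (M + 1) => if (j : ℕ) ≤ (n : ℕ) then 1 else 0}.Finite ∧
    ∑ᶠ p ∈ {p : List ℤ | IsScat M p ∧
        kappa M p = fun j : Fin (M + 1) => if (j : ℕ) ≤ (n : ℕ) then 1 else 0}, weight R p =
      R ((n : ℕ) : ℤ) * ∏ j ∈ Finset.range (n : ℕ), (1 - R (j : ℤ) ^ 2) :=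
  kunetz_formula_general M R hR n
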